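/- arXiv:2311.03674 — 2 statements merged into one kernel-verified Lean document; each statement's English description precedes it below -/
import Mathlib

section
/- Let h, d > 0, ℓ_s² = d²/12, ℓ_k² = d²/6, c = h²/12 + ℓ_k², a, ρ_s > 0, b = a(h²/24 + ℓ_s²). Define c_N²(k) = (b/ρ_s)·k²/(1+(c+ℓ_k²)k²) and c_{N,cl}²(k) = (a/ρ_s)·(h²/24)k²/(1+(h²/12)k²). Then for k ≠ 0: c_N²(k) > c_{N,cl}²(k) if k² < 12/h², and c_N²(k) < c_{N,cl}²(k) if k² > 12/h². -/
/-- Threshold behavior of normally transverse waves: the gradient phase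
velocity exceeds the classical one iff `k² < 12/h²`. -/
theorem stmt_10 (a ρs h d ls2 lk2 c b : ℝ) (ha : 0 < a) (hρ : 0 < ρs)
    (hh : 0 < h) (hd : 0 < d)
    (hls : ls2 = d ^ 2 / 12) (hlk : lk2 = d ^ 2 / 6) (hc : c = h ^ 2 / 12 + lk2)
    (hb : b = a * (h ^ 2 / 24 + ls2)) :
    ∀ k : ℝ, k ≠ 0 →
      (k ^ 2 < 12 / h ^ 2 →
        a / ρs * (h ^ 2 / 24 * k ^ 2 / (1 + h ^ 2 / 12 * k ^ 2))
          < b / ρs * (k ^ 2 / (1 + (c + lk2) * k ^ 2)))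
      ∧ (12 / h ^ 2 < k ^ 2 →
        b / ρs * (k ^ 2 / (1 + (c + lk2) * k ^ 2))
          < a / ρs * (h ^ 2 / 24 * k ^ 2 / (1 + h ^ 2 / 12 * k ^ 2))) := by
  subst hls hlk hc hb
  intro k hk
  have hk2 : 0 < k ^ 2 := by positivity
  have hh2 : (0:ℝ) < h ^ 2 := by positivity
  constructor
  · intro hlt
    have hlt' : k ^ 2 * h ^ 2 < 12 := by
      rw [lt_div_iff₀ hh2] at hlt; linarith
    have t : 0 < a * ρs * k ^ 2 * d ^ 2 := by positivity
    rw [div_mul_div_comm, div_mul_div_comm,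
      div_lt_div_iff₀ (by positivity) (by positivity)]
    nlinarith [mul_pos t (show (0:ℝ) < 12 - k ^ 2 * h ^ 2 by linarith)]
  · intro hlt
    have hlt' : 12 < k ^ 2 * h ^ 2 := by
      rw [div_lt_iff₀ hh2] at hlt; linarith
    have t : 0 < a * ρs * k ^ 2 * d ^ 2 := by positivity
    rw [div_mul_div_comm, div_mul_div_comm,
      div_lt_div_iff₀ (by positivity) (by positivity)]
    nlinarith [mul_pos t (show (0:ℝ) < k ^ 2 * h ^ 2 - 12 by linarith)]
end

section
/- Let ν ∈ (0,1/2), h, d > 0, a, ρ_s > 0, ℓ_s² = d²/12, ℓ_k² = d²/6, c = h²/12 + ℓ_k². Define c_L²(k) = (a/ρ_s)(1+ℓ_s²k²)/(1+(cν²(1−ν)⁻²+ℓ_k²)k²) and c_{L,cl}²(k) = (a/ρ_s)/(1+(h²/12)ν²(1−ν)⁻²k²). Then c_L²(k) < c_{L,cl}²(k) whenever 0 < k² < (12/h²)(2 + (1/ν − 1)²), and c_L²(k) > c_{L,cl}²(k) whenever k² > (12/h²)(2 + (1/ν − 1)²). -/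
/-!
Writing `q = ν² / (1 - ν)²`, `K = k²` and clearing the (positive) denominators, the comparison
of the two phase velocities reduces to the sign of
`(1 + ℓ_s² K)(1 + h² q K / 12) - (1 + (c q + ℓ_k²) K) = d² K / 144 · (h² q K - 12 (2 q + 1))`,
so the curves cross exactly at `K = 12 (2 q + 1) / (h² q) = (12 / h²)(2 + 1 / q)`, and
`1 / q = (1 / ν - 1)²`.
-/

section OrderedField

variable {𝕜 : Type*} [Field 𝕜] [LinearOrder 𝕜] [IsStrictOrderedRing 𝕜] {A N D₁ D₂ : 𝕜}

lemma mul_div_lt_div_iff (hA : 0 < A) (hD₁ : 0 < D₁) (hD₂ : 0 < D₂) :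
    A * (N / D₁) < A / D₂ ↔ N * D₂ < D₁ := by
  rw [div_eq_mul_one_div A, mul_lt_mul_iff_right₀ hA, div_lt_div_iff₀ hD₁ hD₂, one_mul]

lemma div_lt_mul_div_iff (hA : 0 < A) (hD₁ : 0 < D₁) (hD₂ : 0 < D₂) :
    A / D₂ < A * (N / D₁) ↔ D₁ < N * D₂ := by
  rw [div_eq_mul_one_div A, mul_lt_mul_iff_right₀ hA, div_lt_div_iff₀ hD₂ hD₁, one_mul]

end OrderedField

section Dispersion

variable {d h q K : ℝ}

lemma gradient_lt_classical_iff (hd : d ≠ 0) (hh : h ≠ 0) (hq : 0 < q) (hK : 0 < K) :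
    (1 + d ^ 2 / 12 * K) * (1 + h ^ 2 / 12 * q * K)
        < 1 + ((h ^ 2 / 12 + d ^ 2 / 6) * q + d ^ 2 / 6) * K
      ↔ K < 12 * (2 * q + 1) / (h ^ 2 * q) := by
  have hgap : 1 + ((h ^ 2 / 12 + d ^ 2 / 6) * q + d ^ 2 / 6) * K
      - (1 + d ^ 2 / 12 * K) * (1 + h ^ 2 / 12 * q * K)
      = d ^ 2 * K / 144 * (12 * (2 * q + 1) - K * (h ^ 2 * q)) := by ring
  rw [← sub_pos, hgap, mul_pos_iff_of_pos_left (by positivity), sub_pos,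
    lt_div_iff₀ (by positivity)]

lemma classical_lt_gradient_iff (hd : d ≠ 0) (hh : h ≠ 0) (hq : 0 < q) (hK : 0 < K) :
    1 + ((h ^ 2 / 12 + d ^ 2 / 6) * q + d ^ 2 / 6) * K
        < (1 + d ^ 2 / 12 * K) * (1 + h ^ 2 / 12 * q * K)
      ↔ 12 * (2 * q + 1) / (h ^ 2 * q) < K := by
  have hgap : (1 + d ^ 2 / 12 * K) * (1 + h ^ 2 / 12 * q * K)
      - (1 + ((h ^ 2 / 12 + d ^ 2 / 6) * q + d ^ 2 / 6) * K)
      = d ^ 2 * K / 144 * (K * (h ^ 2 * q) - 12 * (2 * q + 1)) := by ring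
  rw [← sub_pos, hgap, mul_pos_iff_of_pos_left (by positivity), sub_pos,
    div_lt_iff₀ (by positivity)]

end Dispersion

lemma crossover_eq {ν h : ℝ} (hν₀ : ν ≠ 0) (hν₁ : 1 - ν ≠ 0) :
    12 / h ^ 2 * (2 + (1 / ν - 1) ^ 2)
      = 12 * (2 * (ν ^ 2 / (1 - ν) ^ 2) + 1) / (h ^ 2 * (ν ^ 2 / (1 - ν) ^ 2)) := by
  field_simp

/-- Threshold behavior of longitudinal waves: the gradient phase velocity
is slower than the classical one for `0 < k² < (12/h²)(2 + (1/ν − 1)²)` and faster above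
this threshold. -/
theorem stmt_11 (ν h d a ρs ls2 lk2 c : ℝ) (hν : ν ∈ Set.Ioo (0 : ℝ) (1 / 2))
    (hh : 0 < h) (hd : 0 < d) (ha : 0 < a) (hρ : 0 < ρs)
    (hls : ls2 = d ^ 2 / 12) (hlk : lk2 = d ^ 2 / 6) (hc : c = h ^ 2 / 12 + lk2) :
    ∀ k : ℝ,
      (0 < k ^ 2 → k ^ 2 < 12 / h ^ 2 * (2 + (1 / ν - 1) ^ 2) →
        a / ρs * ((1 + ls2 * k ^ 2) / (1 + (c * ν ^ 2 / (1 - ν) ^ 2 + lk2) * k ^ 2))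
          < a / ρs / (1 + h ^ 2 / 12 * (ν ^ 2 / (1 - ν) ^ 2) * k ^ 2))
      ∧ (12 / h ^ 2 * (2 + (1 / ν - 1) ^ 2) < k ^ 2 →
        a / ρs / (1 + h ^ 2 / 12 * (ν ^ 2 / (1 - ν) ^ 2) * k ^ 2)
          < a / ρs * ((1 + ls2 * k ^ 2) / (1 + (c * ν ^ 2 / (1 - ν) ^ 2 + lk2) * k ^ 2))) := by
  intro k
  obtain ⟨hν₀, hν₂⟩ := hν
  have hν₁ : 1 - ν ≠ 0 := by linarith
  subst hls hlk hc
  rw [mul_div_assoc _ (ν ^ 2), crossover_eq hν₀.ne' hν₁]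
  set q := ν ^ 2 / (1 - ν) ^ 2
  have hq : 0 < q := by positivity
  have hA : 0 < a / ρs := by positivity
  have hD₁ : 0 < 1 + ((h ^ 2 / 12 + d ^ 2 / 6) * q + d ^ 2 / 6) * k ^ 2 := by positivity
  have hD₂ : 0 < 1 + h ^ 2 / 12 * q * k ^ 2 := by positivity
  refine ⟨fun hk hlt => ?_, fun hlt => ?_⟩
  · rw [mul_div_lt_div_iff hA hD₁ hD₂]
    exact (gradient_lt_classical_iff hd.ne' hh.ne' hq hk).2 hlt
  · rw [div_lt_mul_div_iff hA hD₁ hD₂]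
    have hk : 0 < k ^ 2 := (by positivity : (0 : ℝ) ≤ _).trans_lt hlt
    exact (classical_lt_gradient_iff hd.ne' hh.ne' hq hk).2 hlt
end
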